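/- arXiv:2409.17500 — 4 statements merged into one kernel-verified Lean document; each statement's English description precedes it below -/
import Mathlib

section
/- The function f(x) = −c^T x + (1/θ) Σⱼ ((xⱼ/uⱼ) log(xⱼ/uⱼ) + (1 − xⱼ/uⱼ) log(1 − xⱼ/uⱼ)) on the open box {x : 0 < xⱼ < uⱼ for all j} is strongly convex with strong convexity parameter 4/(θ·(max_j uⱼ)²), i.e., its Hessian satisfies ∇²f(x) ⪰ (4/(θ·max(u)²))·I. -/
/-! The matrix is diagonal, so the claim is an entrywise bound, and that is AM-GM:
`x (u - x) ≤ u² / 4 ≤ (max u)² / 4`. -/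

theorem Matrix.posSemidef_diagonal_sub_smul_one_iff {n R : Type*} [Fintype n] [DecidableEq n]
    [Ring R] [PartialOrder R] [StarRing R] [StarOrderedRing R] {d : n → R} {c : R} :
    (Matrix.diagonal d - c • (1 : Matrix n n R)).PosSemidef ↔ ∀ i, c ≤ d i := by
  rw [Matrix.smul_one_eq_diagonal, Matrix.diagonal_sub, Matrix.posSemidef_diagonal_iff]
  simp only [sub_nonneg]

theorem mul_sub_le_sq_div_four {K : Type*} [Field K] [LinearOrder K] [IsStrictOrderedRing K]
    (x u : K) : x * (u - x) ≤ u ^ 2 / 4 := by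
  nlinarith [sq_nonneg (u - 2 * x)]

theorem four_div_mul_sq_le_one_div_mul_mul_sub {K : Type*} [Field K] [LinearOrder K]
    [IsStrictOrderedRing K] {θ x u M : K} (hθ : 0 < θ) (hx : 0 < x) (hxu : x < u) (huM : u ≤ M) :
    4 / (θ * M ^ 2) ≤ 1 / (θ * x * (u - x)) := by
  have hu : 0 < u := hx.trans hxu
  have hxux : 0 < θ * x * (u - x) := by have := sub_pos.2 hxu; positivity
  calc 4 / (θ * M ^ 2) = 1 / (θ * (M ^ 2 / 4)) := by field_simp
    _ ≤ 1 / (θ * x * (u - x)) := by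
      refine one_div_le_one_div_of_le hxux ?_
      rw [mul_assoc]
      gcongr
      calc x * (u - x) ≤ u ^ 2 / 4 := mul_sub_le_sq_div_four x u
        _ ≤ M ^ 2 / 4 := by gcongr

theorem entropy_hessian_strong_convexity_general (n : ℕ) [NeZero n] (θ : ℝ) (hθ : 0 < θ)
    (u x : Fin n → ℝ) (hx : ∀ j, 0 < x j ∧ x j < u j) :
    (Matrix.diagonal (fun j => 1 / (θ * x j * (u j - x j)))
      - (4 / (θ * (Finset.univ.sup' Finset.univ_nonempty u)^2))
        • (1 : Matrix (Fin n) (Fin n) ℝ)).PosSemidef := by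
  refine Matrix.posSemidef_diagonal_sub_smul_one_iff.2 fun j => ?_
  exact four_div_mul_sq_le_one_div_mul_mul_sub hθ (hx j).1 (hx j).2
    (Finset.le_sup' u (Finset.mem_univ j))

theorem entropy_hessian_strong_convexity (n : ℕ) [NeZero n] (θ : ℝ) (hθ : 0 < θ)
    (u x : Fin n → ℝ) (hu : ∀ j, 0 < u j) (hx : ∀ j, 0 < x j ∧ x j < u j) :
    (Matrix.diagonal (fun j => 1 / (θ * x j * (u j - x j)))
      - (4 / (θ * (Finset.univ.sup' Finset.univ_nonempty u)^2))
        • (1 : Matrix (Fin n) (Fin n) ℝ)).PosSemidef :=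
  entropy_hessian_strong_convexity_general n θ hθ u x hx
end

section
/- The negative dual function −g(y) = −(1/θ)·Σⱼ log σ(θ·uⱼ·(−cⱼ − (Aᵀy)ⱼ)) − bᵀy has a gradient ∇(−g)(y) = A·x(y) − b, where x(y)ⱼ = uⱼ·σ(−θ·uⱼ·(−cⱼ − (Aᵀy)ⱼ)), and this gradient is Lipschitz continuous with Lipschitz constant L = θ·max(u)²·‖A‖₂²/4. -/
open scoped NNReal

noncomputable def sigmoid (t : ℝ) : ℝ := 1 / (1 + Real.exp (-t))

lemma sigmoid_pos (t : ℝ) : 0 < sigmoid t := by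
  unfold sigmoid; positivity

lemma sigmoid_neg_eq (t : ℝ) : sigmoid (-t) = Real.exp (-t) * sigmoid t := by
  unfold sigmoid
  rw [neg_neg]
  have h1 : (1:ℝ) + Real.exp (-t) ≠ 0 := by positivity
  have h2 : (1:ℝ) + Real.exp t ≠ 0 := by positivity
  field_simp
  rw [add_mul, one_mul, ← Real.exp_add]
  simp [add_comm]

lemma one_sub_sigmoid (t : ℝ) : 1 - sigmoid t = sigmoid (-t) := by
  rw [sigmoid_neg_eq]
  unfold sigmoid
  have h1 : (1:ℝ) + Real.exp (-t) ≠ 0 := by positivity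
  field_simp
  ring

lemma hasDerivAt_sigmoid (t : ℝ) :
    HasDerivAt sigmoid (sigmoid t * sigmoid (-t)) t := by
  have h1 : (1:ℝ) + Real.exp (-t) ≠ 0 := by positivity
  have h : HasDerivAt (fun s : ℝ => 1 + Real.exp (-s)) (-Real.exp (-t)) t := by
    have := ((Real.hasDerivAt_exp (-t)).comp t (hasDerivAt_neg t)).const_add 1
    simpa using this
  have h2 := h.inv h1
  have heq : sigmoid t * sigmoid (-t) = -(-Real.exp (-t)) / (1 + Real.exp (-t)) ^ 2 := by
    rw [sigmoid_neg_eq]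
    unfold sigmoid
    field_simp
  rw [heq]
  have hf : sigmoid = (fun s : ℝ => 1 + Real.exp (-s))⁻¹ := by
    funext s
    simp only [sigmoid, Pi.inv_apply, one_div]
  rw [hf]
  exact h2

lemma sigmoid_mul_le (t : ℝ) : sigmoid t * sigmoid (-t) ≤ 1/4 := by
  have h := one_sub_sigmoid t
  nlinarith [sq_nonneg (sigmoid t - sigmoid (-t))]

lemma sigmoid_lipschitz (a b : ℝ) : |sigmoid a - sigmoid b| ≤ (1/4) * |a - b| := by
  have hl : LipschitzWith (1/4 : ℝ≥0) sigmoid := by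
    apply lipschitzWith_of_nnnorm_deriv_le (fun t => (hasDerivAt_sigmoid t).differentiableAt)
    intro t
    rw [(hasDerivAt_sigmoid t).deriv]
    rw [← NNReal.coe_le_coe, coe_nnnorm, Real.norm_eq_abs, abs_of_nonneg
      (mul_nonneg (sigmoid_pos t).le (sigmoid_pos (-t)).le)]
    push_cast
    exact_mod_cast sigmoid_mul_le t
  have := hl.dist_le_mul a b
  simpa [Real.dist_eq] using this

lemma hasDerivAt_log_sigmoid (t : ℝ) :
    HasDerivAt (fun s => Real.log (sigmoid s)) (sigmoid (-t)) t := by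
  have h := (hasDerivAt_sigmoid t).log (ne_of_gt (sigmoid_pos t))
  have heq : sigmoid t * sigmoid (-t) / sigmoid t = sigmoid (-t) := by
    rw [mul_comm, mul_div_assoc, div_self (ne_of_gt (sigmoid_pos t)), mul_one]
  rwa [heq] at h

lemma lipschitz_pi {n : ℕ} (f : Fin n → ℝ → ℝ) (K : ℝ≥0)
    (h : ∀ j a b, dist (f j a) (f j b) ≤ K * dist a b)
    (F : EuclideanSpace ℝ (Fin n) → EuclideanSpace ℝ (Fin n))
    (hF : ∀ z j, F z j = f j (z j)) :
    LipschitzWith K F := by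
  rw [lipschitzWith_iff_dist_le_mul]
  intro z w
  have e1 := EuclideanSpace.dist_eq (𝕜 := ℝ) (x := F z) (y := F w)
  simp only [hF] at e1
  have e2 := EuclideanSpace.dist_eq (𝕜 := ℝ) (x := z) (y := w)
  rw [e1, e2]
  have h2 : ∀ j : Fin n, dist (f j (z j)) (f j (w j)) ^ 2 ≤ (K:ℝ)^2 * dist (z j) (w j) ^ 2 := by
    intro j
    have := h j (z j) (w j)
    nlinarith [dist_nonneg (x := f j (z j)) (y := f j (w j)), dist_nonneg (x := z j) (y := w j)]
  calc Real.sqrt (∑ j, dist (f j (z j)) (f j (w j)) ^ 2)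
      ≤ Real.sqrt (∑ j, (K:ℝ)^2 * dist (z j) (w j) ^ 2) := by
        apply Real.sqrt_le_sqrt
        exact Finset.sum_le_sum fun j _ => h2 j
    _ = (K:ℝ) * Real.sqrt (∑ j, dist (z j) (w j) ^ 2) := by
        rw [← Finset.mul_sum, Real.sqrt_mul (by positivity), Real.sqrt_sq K.coe_nonneg]

theorem neg_dual_gradient_and_lipschitz (m n : ℕ) [NeZero n]
    (A : Matrix (Fin m) (Fin n) ℝ) (b : Fin m → ℝ) (c u : Fin n → ℝ)
    (θ : ℝ) (hθ : 0 < θ) (hu : ∀ j, 0 < u j)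
    (negg : EuclideanSpace ℝ (Fin m) → ℝ)
    (hnegg : negg = fun (y : EuclideanSpace ℝ (Fin m)) => -(1/θ) * ∑ j,
        Real.log (sigmoid (θ * u j * (-c j - A.transpose.mulVec y.ofLp j)))
      - ∑ i, b i * y i)
    (x : EuclideanSpace ℝ (Fin m) → Fin n → ℝ)
    (hx : x = fun (y : EuclideanSpace ℝ (Fin m)) j => u j * sigmoid (-θ * u j * (-c j - A.transpose.mulVec y.ofLp j))) :
    (∀ y, gradient negg y = fun i => A.mulVec (x y) i - b i) ∧
    LipschitzWith (Real.toNNReal (θ * (Finset.univ.sup' Finset.univ_nonempty u)^2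
        * ‖LinearMap.toContinuousLinearMap (Matrix.toEuclideanLin A)‖^2 / 4))
      (fun y => gradient negg y) := by
  subst hx
  set TA := LinearMap.toContinuousLinearMap (Matrix.toEuclideanLin A) with hTA
  set TB := LinearMap.toContinuousLinearMap (Matrix.toEuclideanLin A.transpose) with hTB
  set S := Finset.univ.sup' Finset.univ_nonempty u with hS
  have hθ' : θ ≠ 0 := ne_of_gt hθ
  -- the linear functionals
  set ℓ : Fin n → (EuclideanSpace ℝ (Fin m) →L[ℝ] ℝ) :=
    fun j => (EuclideanSpace.proj j).comp TB with hℓ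
  have hℓapp : ∀ (j : Fin n) (w : EuclideanSpace ℝ (Fin m)),
      ℓ j w = ∑ i, A i j * w i := by
    intro j w
    show A.transpose.mulVec w.ofLp j = _
    simp [Matrix.mulVec, dotProduct, Matrix.transpose_apply]
  set b' : EuclideanSpace ℝ (Fin m) := WithLp.toLp 2 (fun i => b i) with hb'
  -- gradient part
  have hgrad : ∀ y : EuclideanSpace ℝ (Fin m), HasGradientAt negg
      (show EuclideanSpace ℝ (Fin m) from WithLp.toLp 2 <|
        fun i => A.mulVec ((fun y j => u j * sigmoid (-θ * u j * (-c j - A.transpose.mulVec y.ofLp j))) y) i - b i) y := by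
    intro y
    rw [hnegg]
    set d : Fin n → ℝ := fun j =>
      sigmoid (-(θ * u j * (-c j - A.transpose.mulVec y.ofLp j))) * (θ * u j * -1) with hd
    have hj : ∀ j : Fin n, HasFDerivAt
        (fun y : EuclideanSpace ℝ (Fin m) =>
          Real.log (sigmoid (θ * u j * (-c j - A.transpose.mulVec y.ofLp j))))
        (d j • ℓ j) y := by
      intro j
      have haff : HasDerivAt (fun s : ℝ => θ * u j * (-c j - s)) (θ * u j * -1)
          (ℓ j y) := by
        have h0 : HasDerivAt (fun s : ℝ => -c j - s) (-1) (ℓ j y) := by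
          simpa using (hasDerivAt_id (ℓ j y)).const_sub (-c j)
        simpa using h0.const_mul (θ * u j)
      have hcomp := (hasDerivAt_log_sigmoid (θ * u j * (-c j - ℓ j y))).comp (ℓ j y) haff
      exact hcomp.comp_hasFDerivAt y (ℓ j).hasFDerivAt
    have hsum := HasFDerivAt.fun_sum (fun j (_ : j ∈ Finset.univ) => hj j)
    have hmain := hsum.const_mul (-(1/θ))
    have hbfun : (fun y : EuclideanSpace ℝ (Fin m) => ∑ i, b i * y i)
        = ⇑(innerSL ℝ b') := by
      funext w
      simp [PiLp.inner_apply]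
      exact Finset.sum_congr rfl fun i _ => mul_comm _ _
    have hb : HasFDerivAt (fun y : EuclideanSpace ℝ (Fin m) => ∑ i, b i * y i)
        (innerSL ℝ b') y := by
      rw [hbfun]; exact (innerSL ℝ b').hasFDerivAt
    have htotal := hmain.sub hb
    rw [hasGradientAt_iff_hasFDerivAt]
    refine htotal.congr_fderiv ?_
    apply ContinuousLinearMap.ext
    intro v
    simp only [ContinuousLinearMap.coe_sub', Pi.sub_apply, ContinuousLinearMap.smul_apply,
      ContinuousLinearMap.coe_sum', Finset.sum_apply, smul_eq_mul,
      InnerProductSpace.toDual_apply_apply, PiLp.inner_apply, RCLike.inner_apply, conj_trivial,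
      hbfun]
    simp only [hℓapp]
    have hterm : ∀ j : Fin n, -(1/θ) * (d j * ∑ i, A i j * v i)
        = ∑ i : Fin m, A i j * (u j * sigmoid (-θ * u j * (-c j - A.transpose.mulVec y.ofLp j))) * v i := by
      intro j
      rw [Finset.mul_sum, Finset.mul_sum]
      refine Finset.sum_congr rfl fun i _ => ?_
      simp only [hd]
      rw [show -(θ * u j * (-c j - A.transpose.mulVec y.ofLp j))
          = -θ * u j * (-c j - A.transpose.mulVec y.ofLp j) by ring]
      field_simp
    have hbv : (innerSL ℝ) b' v = ∑ i, b i * v i := by rw [← hbfun]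
    rw [hbv]
    simp only [mul_comm (v.ofLp _)]
    simp only [Matrix.mulVec, dotProduct, sub_mul, Finset.sum_sub_distrib,
      Finset.sum_mul]
    rw [Finset.sum_comm, Finset.mul_sum]
    congr 1
    exact Finset.sum_congr rfl fun j _ => hterm j
  refine ⟨fun y => congrArg WithLp.ofLp (hgrad y).gradient, ?_⟩
  -- Lipschitz part
  set f : Fin n → ℝ → ℝ := fun j s => u j * sigmoid (-θ * u j * (-c j - s)) with hf
  set Φ : EuclideanSpace ℝ (Fin n) → EuclideanSpace ℝ (Fin n) :=
    fun z => WithLp.toLp 2 (fun j => f j (z j)) with hΦ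
  set H : EuclideanSpace ℝ (Fin m) → EuclideanSpace ℝ (Fin m) :=
    fun y => TA (Φ (TB y)) - b' with hH
  have hHeq : (fun y : EuclideanSpace ℝ (Fin m) => gradient negg y) = H := by
    funext y
    rw [(hgrad y).gradient]
    rfl
  rw [hHeq]
  -- constants
  have hS0 : 0 < S := by
    obtain ⟨j0⟩ : Nonempty (Fin n) := inferInstance
    exact lt_of_lt_of_le (hu j0) (Finset.le_sup' u (Finset.mem_univ j0))
  set K0 : ℝ≥0 := Real.toNNReal (θ * S^2 / 4) with hK0
  have hK0c : (K0 : ℝ) = θ * S^2 / 4 := Real.coe_toNNReal _ (by positivity)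
  have hflip : ∀ (j : Fin n) (a e : ℝ), dist (f j a) (f j e) ≤ (K0 : ℝ) * dist a e := by
    intro j a e
    have hSj : u j ≤ S := Finset.le_sup' u (Finset.mem_univ j)
    have huj := hu j
    rw [hK0c, Real.dist_eq, Real.dist_eq, hf]
    have h1 : u j * sigmoid (-θ * u j * (-c j - a)) - u j * sigmoid (-θ * u j * (-c j - e))
        = u j * (sigmoid (-θ * u j * (-c j - a)) - sigmoid (-θ * u j * (-c j - e))) := by ring
    rw [h1, abs_mul, abs_of_nonneg huj.le]
    have h2 := sigmoid_lipschitz (-θ * u j * (-c j - a)) (-θ * u j * (-c j - e))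
    have h3 : (-θ * u j * (-c j - a)) - (-θ * u j * (-c j - e)) = θ * u j * (a - e) := by ring
    rw [h3] at h2
    rw [abs_mul, abs_of_nonneg (by positivity : (0:ℝ) ≤ θ * u j)] at h2
    calc u j * |sigmoid (-θ * u j * (-c j - a)) - sigmoid (-θ * u j * (-c j - e))|
        ≤ u j * (1/4 * (θ * u j * |a - e|)) :=
          mul_le_mul_of_nonneg_left h2 huj.le
      _ = θ * (u j)^2 / 4 * |a - e| := by ring
      _ ≤ θ * S^2 / 4 * |a - e| := by
          have h4 : (u j)^2 ≤ S^2 := pow_le_pow_left₀ huj.le hSj 2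
          have h5 : θ * (u j)^2 / 4 ≤ θ * S^2 / 4 := by
            have h6 := mul_le_mul_of_nonneg_left h4 hθ.le
            linarith
          exact mul_le_mul_of_nonneg_right h5 (abs_nonneg _)
  have LΦ : LipschitzWith K0 Φ := lipschitz_pi f K0 hflip Φ (fun z j => rfl)
  have L : LipschitzWith (‖TA‖₊ * K0 * ‖TB‖₊) (⇑TA ∘ Φ ∘ ⇑TB) :=
    (TA.lipschitz.comp LΦ).comp TB.lipschitz
  have L2 : LipschitzWith (‖TA‖₊ * K0 * ‖TB‖₊) H := by
    rw [lipschitzWith_iff_dist_le_mul] at L ⊢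
    intro y1 y2
    have hLy := L y1 y2
    have hdist : dist (H y1) (H y2)
        = dist ((⇑TA ∘ Φ ∘ ⇑TB) y1) ((⇑TA ∘ Φ ∘ ⇑TB) y2) := by
      rw [hH]
      exact dist_sub_right _ _ _
    rw [hdist]
    exact hLy
  have hnorm : ‖TB‖ = ‖TA‖ := by
    rw [hTB, hTA]
    have h : A.transpose = A.conjTranspose := by
      ext i j; simp [Matrix.conjTranspose_apply]
    rw [h, Matrix.toEuclideanLin_conjTranspose_eq_adjoint,
      LinearMap.adjoint_toContinuousLinearMap]
    exact ContinuousLinearMap.adjoint.norm_map _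
  refine L2.weaken ?_
  rw [← NNReal.coe_le_coe, NNReal.coe_mul, NNReal.coe_mul, coe_nnnorm, coe_nnnorm,
    hK0c, hnorm, Real.coe_toNNReal _ (by positivity)]
  exact le_of_eq (by ring)
end

section
/- The function y ↦ −(1/θ)·Σⱼ log σ(θ·uⱼ·(−cⱼ − (Aᵀy)ⱼ)) − bᵀy is convex on ℝᵐ. Moreover, if A has full row rank, it is strictly convex. -/
open Matrix

/-!
`log σ` is strictly concave, its derivative `1 - σ` being strictly decreasing; hence so is
`v ↦ ∑ⱼ log σ(vⱼ)` on `ℝⁿ`. The objective is `-1/θ` times this function composed with the affine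
map `y ↦ θ u ⊙ (-c - Aᵀ y)`, minus a linear term, so it is convex. When `A` has full row rank,
`Aᵀ` is injective, hence so is the affine map (as `θ uⱼ ≠ 0`), and strictness survives the
composition.
-/

open Set Function

theorem sigmoid_eq_real_sigmoid : sigmoid = Real.sigmoid := by
  funext t
  rw [sigmoid, Real.sigmoid_def, one_div]

theorem strictConcaveOn_log_sigmoid : StrictConcaveOn ℝ univ fun t => Real.log (sigmoid t) := by
  rw [sigmoid_eq_real_sigmoid]
  have hderiv (t : ℝ) :
      HasDerivAt (fun t => Real.log (Real.sigmoid t)) (1 - Real.sigmoid t) t := by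
    convert (Real.hasDerivAt_sigmoid t).log (Real.sigmoid_pos t).ne' using 1
    field_simp [(Real.sigmoid_pos t).ne']
  refine StrictAnti.strictConcaveOn_univ_of_deriv
    (continuous_sigmoid.log fun t => (Real.sigmoid_pos t).ne') ?_
  rw [funext fun t => (hderiv t).deriv]
  exact fun a b hab => sub_lt_sub_left (Real.sigmoid_strictMono hab) 1

theorem StrictConcaveOn.comp_affineMap_of_injective {𝕜 E F β : Type*} [Ring 𝕜] [PartialOrder 𝕜]
    [AddCommGroup E] [AddCommGroup F] [Module 𝕜 E] [Module 𝕜 F] [AddCommMonoid β] [PartialOrder β]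
    [SMul 𝕜 β] {f : F → β} {g : E →ᵃ[𝕜] F} (hg : Injective g) {s : Set F}
    (hf : StrictConcaveOn 𝕜 s f) : StrictConcaveOn 𝕜 (g ⁻¹' s) (f ∘ g) :=
  ⟨hf.1.affine_preimage _, fun x hx y hy hxy a b ha hb hab => by
    simpa only [Function.comp_apply, Convex.combo_affine_apply hab] using
      hf.2 hx hy (hg.ne hxy) ha hb hab⟩

section

variable {𝕜 E : Type*} [Field 𝕜] [LinearOrder 𝕜] [IsStrictOrderedRing 𝕜]
  [AddCommGroup E] [Module 𝕜 E]

theorem StrictConcaveOn.sum_apply {ι : Type*} [Fintype ι] {g : 𝕜 → 𝕜}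
    (hg : StrictConcaveOn 𝕜 univ g) : StrictConcaveOn 𝕜 univ fun v : ι → 𝕜 => ∑ i, g (v i) := by
  refine ⟨convex_univ, fun x _ y _ hxy a b ha hb hab => ?_⟩
  obtain ⟨i, hi⟩ := ne_iff.mp hxy
  calc a • ∑ j, g (x j) + b • ∑ j, g (y j) = ∑ j, (a • g (x j) + b • g (y j)) := by
        rw [Finset.sum_add_distrib, Finset.smul_sum, Finset.smul_sum]
    _ < ∑ j, g ((a • x + b • y) j) :=
        Finset.sum_lt_sum (fun j _ => hg.concaveOn.2 trivial trivial ha.le hb.le hab)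
          ⟨i, Finset.mem_univ i, hg.2 trivial trivial hi ha hb hab⟩

theorem ConcaveOn.const_mul_of_nonpos {s : Set E} {f : E → 𝕜} {c : 𝕜} (hc : c ≤ 0)
    (hf : ConcaveOn 𝕜 s f) : ConvexOn 𝕜 s fun x => c * f x :=
  ⟨hf.1, fun x hx y hy a b ha hb hab =>
    calc c * f (a • x + b • y) ≤ c * (a • f x + b • f y) :=
          mul_le_mul_of_nonpos_left (hf.2 hx hy ha hb hab) hc
      _ = a • (c * f x) + b • (c * f y) := by simp only [smul_eq_mul]; ring⟩

theorem StrictConcaveOn.const_mul_of_neg {s : Set E} {f : E → 𝕜} {c : 𝕜} (hc : c < 0)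
    (hf : StrictConcaveOn 𝕜 s f) : StrictConvexOn 𝕜 s fun x => c * f x :=
  ⟨hf.1, fun x hx y hy hxy a b ha hb hab =>
    calc c * f (a • x + b • y) < c * (a • f x + b • f y) :=
          mul_lt_mul_of_neg_left (hf.2 hx hy hxy ha hb hab) hc
      _ = a • (c * f x) + b • (c * f y) := by simp only [smul_eq_mul]; ring⟩

end

theorem Matrix.mulVec_injective_of_rank_eq_card {K m n : Type*} [Field K] [Fintype m]
    [Fintype n] (M : Matrix m n K) (h : M.rank = Fintype.card n) : Injective M.mulVec := by
  have hker : Module.finrank K (LinearMap.ker M.mulVecLin) = 0 := by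
    have := LinearMap.finrank_range_add_finrank_ker M.mulVecLin
    rw [Module.finrank_fintype_fun_eq_card] at this
    change M.rank + _ = _ at this
    omega
  exact LinearMap.ker_eq_bot.mp (Submodule.finrank_eq_zero.mp hker)

section

variable {m n : Type*} [Fintype m] (A : Matrix m n ℝ) (c u : n → ℝ) (θ : ℝ)

noncomputable def dualLogits : (m → ℝ) →ᵃ[ℝ] (n → ℝ) :=
  (LinearMap.mulLeft ℝ (θ • u)).toAffineMap.comp
    (AffineMap.const ℝ _ (-c) - Aᵀ.mulVecLin.toAffineMap)

theorem dualLogits_apply (y : m → ℝ) (j : n) :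
    dualLogits A c u θ y j = θ * u j * (-c j - (Aᵀ *ᵥ y) j) := by
  simp [dualLogits, mulVec_transpose, mul_assoc]

variable {A c u θ}

theorem dualLogits_injective (hθ : θ ≠ 0) (hu : ∀ j, u j ≠ 0) (hA : Injective Aᵀ.mulVec) :
    Injective (dualLogits A c u θ) := by
  refine fun x y hxy => hA (funext fun j => ?_)
  have hj := congrFun hxy j
  rw [dualLogits_apply, dualLogits_apply] at hj
  linarith [mul_left_cancel₀ (mul_ne_zero hθ (hu j)) hj]

end

theorem neg_dual_convex (m n : ℕ) (A : Matrix (Fin m) (Fin n) ℝ)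
    (b : Fin m → ℝ) (c u : Fin n → ℝ) (θ : ℝ) (hθ : 0 < θ) (hu : ∀ j, 0 < u j) :
    ConvexOn ℝ Set.univ (fun y : Fin m → ℝ =>
      -(1/θ) * ∑ j, Real.log (sigmoid (θ * u j * (-c j - A.transpose.mulVec y j)))
        - b ⬝ᵥ y) ∧
    (A.rank = m → StrictConvexOn ℝ Set.univ (fun y : Fin m → ℝ =>
      -(1/θ) * ∑ j, Real.log (sigmoid (θ * u j * (-c j - A.transpose.mulVec y j)))
        - b ⬝ᵥ y)) := by
  have hsum : StrictConcaveOn ℝ univ fun v : Fin n → ℝ => ∑ j, Real.log (sigmoid (v j)) :=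
    strictConcaveOn_log_sigmoid.sum_apply
  have hscale : -(1 / θ) < 0 := by simpa using hθ
  have hlin : ConcaveOn ℝ univ fun y : Fin m → ℝ => b ⬝ᵥ y :=
    (dotProductBilin ℝ ℝ b).concaveOn convex_univ
  constructor
  · simpa only [dualLogits_apply, preimage_univ, Function.comp_apply, Pi.sub_def] using
      ((hsum.concaveOn.comp_affineMap (dualLogits A c u θ)).const_mul_of_nonpos hscale.le).sub hlin
  · intro hrank
    have hinj : Injective (dualLogits A c u θ) :=
      dualLogits_injective hθ.ne' (fun j => (hu j).ne')
        (Aᵀ.mulVec_injective_of_rank_eq_card (by rw [rank_transpose, hrank, Fintype.card_fin]))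
    simpa only [dualLogits_apply, preimage_univ, Function.comp_apply, Pi.sub_def] using
      ((hsum.comp_affineMap_of_injective hinj).const_mul_of_neg hscale).sub_concaveOn hlin
end

section
/- Let f be differentiable and μ-strongly convex. Then for any x₁, x₂ in its domain, (∇f(x₁) − ∇f(x₂))ᵀ(x₁ − x₂) ≥ μ·‖x₁ − x₂‖₂², where for the entropy-regularized objective f(x) = −cᵀx + (1/θ)Σⱼ φ(xⱼ/uⱼ) the gradient is ∇f(x)ⱼ = −cⱼ + (1/(θuⱼ))·log(xⱼ/(uⱼ−xⱼ)) and μ = 4/(θ·max(u)²). -/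
lemma entropy_mono_aux (u a b : ℝ) (hu : 0 < u) (ha : a ∈ Set.Ioo 0 u)
    (hb : b ∈ Set.Ioo 0 u) (hlt : b < a) :
    (4/u) * (a - b) ≤ (Real.log a - Real.log (u - a)) - (Real.log b - Real.log (u - b)) := by
  obtain ⟨ha0, hau⟩ := ha
  obtain ⟨hb0, hbu⟩ := hb
  set F : ℝ → ℝ := fun t => Real.log t - Real.log (u - t) with hF
  have hderiv : ∀ t ∈ Set.Ioo 0 u, HasDerivAt F (1/t + 1/(u - t)) t := by
    intro t ⟨ht0, htu⟩
    have h1 : HasDerivAt Real.log (1/t) t := by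
      simpa [one_div] using Real.hasDerivAt_log (ne_of_gt ht0)
    have h2 : HasDerivAt (fun t => Real.log (u - t)) (-(1/(u-t))) t := by
      have hsub : HasDerivAt (fun t : ℝ => u - t) (-1) t := by
        simpa using (hasDerivAt_id t).const_sub u
      have := (Real.hasDerivAt_log (ne_of_gt (by linarith : (0:ℝ) < u - t))).comp t hsub
      simpa [one_div, Function.comp_def] using this
    simpa [hF, sub_neg_eq_add, Pi.sub_def] using h1.sub h2
  have hcont : ContinuousOn F (Set.Icc b a) := by
    intro t ht
    have ht' : t ∈ Set.Ioo 0 u := ⟨lt_of_lt_of_le hb0 ht.1, lt_of_le_of_lt ht.2 hau⟩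
    exact ((hderiv t ht').continuousAt).continuousWithinAt
  obtain ⟨c, hc, hceq⟩ := exists_hasDerivAt_eq_slope F (fun t => 1/t + 1/(u-t)) hlt hcont
    (fun t ht => hderiv t ⟨lt_trans hb0 ht.1, lt_trans ht.2 hau⟩)
  have hc0 : 0 < c := lt_trans hb0 hc.1
  have hcu : c < u := lt_trans hc.2 hau
  have hbound : 4/u ≤ 1/c + 1/(u-c) := by
    rw [div_add_div _ _ (ne_of_gt hc0) (ne_of_gt (by linarith : (0:ℝ) < u - c))]
    rw [div_le_div_iff₀ hu (mul_pos hc0 (by linarith : (0:ℝ) < u - c))]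
    nlinarith [sq_nonneg (u - 2*c)]
  have hslope : (F a - F b) / (a - b) = 1/c + 1/(u-c) := hceq.symm
  have hab : 0 < a - b := by linarith
  have : 4/u ≤ (F a - F b) / (a - b) := hslope ▸ hbound
  calc (4/u) * (a - b) ≤ ((F a - F b) / (a - b)) * (a - b) := by
        exact mul_le_mul_of_nonneg_right this (le_of_lt hab)
    _ = F a - F b := by field_simp

lemma entropy_key (u a b : ℝ) (hu : 0 < u) (ha : a ∈ Set.Ioo 0 u) (hb : b ∈ Set.Ioo 0 u) :
    (4/u) * (a - b)^2 ≤ (Real.log (a/(u - a)) - Real.log (b/(u - b))) * (a - b) := by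
  have hla : Real.log (a/(u-a)) = Real.log a - Real.log (u - a) :=
    Real.log_div (ne_of_gt ha.1) (ne_of_gt (by linarith [ha.2]))
  have hlb : Real.log (b/(u-b)) = Real.log b - Real.log (u - b) :=
    Real.log_div (ne_of_gt hb.1) (ne_of_gt (by linarith [hb.2]))
  rw [hla, hlb]
  rcases lt_trichotomy b a with h | h | h
  · have := entropy_mono_aux u a b hu ha hb h
    nlinarith
  · simp [h]
  · have := entropy_mono_aux u b a hu hb ha h
    nlinarith

theorem entropy_gradient_strong_monotonicity (n : ℕ) [NeZero n] (θ : ℝ)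
    (hθ : 0 < θ) (u c : Fin n → ℝ) (hu : ∀ j, 0 < u j)
    (g : (Fin n → ℝ) → Fin n → ℝ)
    (hg : g = fun x j => -c j + (1/(θ * u j)) * Real.log (x j / (u j - x j)))
    (x₁ x₂ : Fin n → ℝ)
    (h₁ : ∀ j, x₁ j ∈ Set.Ioo 0 (u j)) (h₂ : ∀ j, x₂ j ∈ Set.Ioo 0 (u j)) :
    (4 / (θ * (Finset.univ.sup' Finset.univ_nonempty u)^2)) * ∑ j, (x₁ j - x₂ j)^2
      ≤ ∑ j, (g x₁ j - g x₂ j) * (x₁ j - x₂ j) := by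
  set U := Finset.univ.sup' Finset.univ_nonempty u with hU
  obtain ⟨j₀⟩ := Fin.pos_iff_nonempty.mp (NeZero.pos n)
  have hUpos : 0 < U := lt_of_lt_of_le (hu j₀) (Finset.le_sup' u (Finset.mem_univ j₀))
  rw [Finset.mul_sum]
  apply Finset.sum_le_sum
  intro j _
  have huj := hu j
  have hujU : u j ≤ U := Finset.le_sup' u (Finset.mem_univ j)
  have hkey := entropy_key (u j) (x₁ j) (x₂ j) huj (h₁ j) (h₂ j)
  have hgd : (g x₁ j - g x₂ j) * (x₁ j - x₂ j)
      = (1/(θ * u j)) * ((Real.log (x₁ j/(u j - x₁ j)) - Real.log (x₂ j/(u j - x₂ j))) * (x₁ j - x₂ j)) := by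
    simp only [hg]; ring
  rw [hgd]
  have h1 : 4 / (θ * U^2) * (x₁ j - x₂ j)^2 ≤ 4 / (θ * (u j)^2) * (x₁ j - x₂ j)^2 := by
    apply mul_le_mul_of_nonneg_right _ (sq_nonneg _)
    apply div_le_div_of_nonneg_left (by norm_num) (by positivity)
    have : (u j)^2 ≤ U^2 := by nlinarith
    nlinarith
  refine h1.trans ?_
  have h2 : 4 / (θ * (u j)^2) * (x₁ j - x₂ j)^2 = (1/(θ * u j)) * ((4/(u j)) * (x₁ j - x₂ j)^2) := by
    field_simp
  rw [h2]
  exact mul_le_mul_of_nonneg_left hkey (by positivity)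
end
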